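/- In the setting of the FPL/IFPL comparison, if the game G is non-degenerate and its deviation Dev(G) = limsup_{t→∞} s_t/v_t satisfies Dev(G) ≤ (1/2)μδ for some 0 < δ < 1, then the expected one-step gains satisfy l_t ≥ (1−δ)·r_t for all sufficiently large t. -/

import Mathlib

open MeasureTheory ProbabilityTheory Filter

/-- Cumulative gain `sⁱ_{1:t}`, including the initial gain `sⁱ_0` (taken to be `1`). -/
noncomputable def cum (s : ℕ → ℝ) (t : ℕ) : ℝ := ∑ j ∈ Finset.range (t + 1), s j

/-- `v_t = max {s¹_{1:t}, s²_{1:t}}`. -/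
noncomputable def vmax (s1 s2 : ℕ → ℝ) (t : ℕ) : ℝ := max (cum s1 t) (cum s2 t)

/-- The event that the perturbed leader, with cumulative gains evaluated at time `u` and
learning rate `ε_u = 1/(μ v_u)` (so the perturbation is `ξ/ε_u = μ v_u ξ`), selects
expert 1 at step `t`. For FPL take `u = t - 1`, for IFPL take `u = t`. -/
def pick1 {Ω : Type*} (ξ : ℕ × Bool → Ω → ℝ) (μ : ℝ) (s1 s2 : ℕ → ℝ) (t u : ℕ) : Set Ω :=
  {ω | cum s1 u + μ * vmax s1 s2 u * ξ (t, true) ω >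
       cum s2 u + μ * vmax s1 s2 u * ξ (t, false) ω}

/-- Expected one-step gain `l_t` of the FPL algorithm (learning rate `1/(μ v_{t-1})`). -/
noncomputable def fplGain {Ω : Type*} [MeasurableSpace Ω] (Pr : Measure Ω)
    (ξ : ℕ × Bool → Ω → ℝ) (μ : ℝ) (s1 s2 : ℕ → ℝ) (t : ℕ) : ℝ :=
  s1 t * (Pr (pick1 ξ μ s1 s2 t (t - 1))).toReal +
  s2 t * (Pr (pick1 ξ μ s1 s2 t (t - 1))ᶜ).toReal

/-- Expected one-step gain `r_t` of the IFPL algorithm (learning rate `1/(μ v_t)`). -/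
noncomputable def ifplGain {Ω : Type*} [MeasurableSpace Ω] (Pr : Measure Ω)
    (ξ : ℕ × Bool → Ω → ℝ) (μ : ℝ) (s1 s2 : ℕ → ℝ) (t : ℕ) : ℝ :=
  s1 t * (Pr (pick1 ξ μ s1 s2 t t)).toReal +
  s2 t * (Pr (pick1 ξ μ s1 s2 t t)ᶜ).toReal

open scoped ENNReal

/-!
At step `t` only one expert gains, say `s = s_t`. FPL and IFPL follow it iff the difference of
the two exponential perturbations exceeds that expert's deficit, scaled by `μ v_{t-1}` and by
`μ v_t` respectively. Passing from `t-1` to `t` lowers this threshold by at most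
`d = 2 s / (μ v_t)`. Conditionally on the other perturbation, raising the threshold of an
exponential variable by `d` costs at most a factor `e^{-d}`, so `l_t ≥ e^{-d} r_t`; eventually
`d < -log (1 - δ)` because the deviation is at most `μδ/2 < -μ log (1 - δ) / 2`.
-/

section ExponentialTail

variable {Ω : Type*} [MeasurableSpace Ω] {P : Measure Ω} [IsProbabilityMeasure P] {X Y : Ω → ℝ}

lemma measure_gt_eq_ofReal_exp_neg_max
    (htail : ∀ y : ℝ, 0 ≤ y → P {ω | X ω > y} = ENNReal.ofReal (Real.exp (-y))) (z : ℝ) :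
    P {ω | X ω > z} = ENNReal.ofReal (Real.exp (-max z 0)) := by
  rcases le_total 0 z with hz | hz
  · rw [max_eq_left hz, htail z hz]
  · rw [max_eq_right hz, neg_zero, Real.exp_zero, ENNReal.ofReal_one]
    refine le_antisymm prob_le_one ?_
    calc (1 : ℝ≥0∞) = P {ω | X ω > 0} := by simp [htail 0 le_rfl]
      _ ≤ P {ω | X ω > z} := measure_mono fun ω (h : 0 < X ω) => hz.trans_lt h

lemma ofReal_exp_neg_mul_measure_gt_le
    (htail : ∀ y : ℝ, 0 ≤ y → P {ω | X ω > y} = ENNReal.ofReal (Real.exp (-y)))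
    {z z' d : ℝ} (hd : 0 ≤ d) (h : z ≤ z' + d) :
    ENNReal.ofReal (Real.exp (-d)) * P {ω | X ω > z'} ≤ P {ω | X ω > z} := by
  rw [measure_gt_eq_ofReal_exp_neg_max htail, measure_gt_eq_ofReal_exp_neg_max htail,
    ← ENNReal.ofReal_mul (Real.exp_nonneg _), ← Real.exp_add]
  refine ENNReal.ofReal_le_ofReal (Real.exp_le_exp.2 ?_)
  have : max z 0 ≤ d + max z' 0 :=
    max_le (by linarith [le_max_left z' 0]) (by linarith [le_max_right z' 0])
  linarith

lemma measure_gt_add_eq_lintegral (hX : Measurable X) (hY : Measurable Y)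
    (hXY : IndepFun X Y P) (c : ℝ) :
    P {ω | X ω > Y ω + c} = ∫⁻ y, P {ω | X ω > y + c} ∂(P.map Y) := by
  have hS : MeasurableSet {p : ℝ × ℝ | p.1 + c < p.2} :=
    measurableSet_lt (measurable_fst.add measurable_const) measurable_snd
  have hmap : P.map (fun ω => (Y ω, X ω)) = (P.map Y).prod (P.map X) :=
    (indepFun_iff_map_prod_eq_prod_map_map hY.aemeasurable hX.aemeasurable).1 hXY.symm
  change P ((fun ω => (Y ω, X ω)) ⁻¹' {p : ℝ × ℝ | p.1 + c < p.2}) = _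
  rw [← Measure.map_apply (hY.prodMk hX) hS, hmap, Measure.prod_apply hS]
  exact lintegral_congr fun y => Measure.map_apply hX (measurableSet_Ioi (a := y + c))

lemma ofReal_exp_neg_mul_measure_gt_add_le (hX : Measurable X) (hY : Measurable Y)
    (hXY : IndepFun X Y P)
    (htail : ∀ y : ℝ, 0 ≤ y → P {ω | X ω > y} = ENNReal.ofReal (Real.exp (-y)))
    {c c' d : ℝ} (hd : 0 ≤ d) (h : c ≤ c' + d) :
    ENNReal.ofReal (Real.exp (-d)) * P {ω | X ω > Y ω + c'} ≤ P {ω | X ω > Y ω + c} := by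
  rw [measure_gt_add_eq_lintegral hX hY hXY, measure_gt_add_eq_lintegral hX hY hXY,
    ← lintegral_const_mul' _ _ ENNReal.ofReal_ne_top]
  exact lintegral_mono fun y => ofReal_exp_neg_mul_measure_gt_le htail hd (by linarith)

/-- The strict hypothesis leaves room to pass through a strict event, so that no statement about
ties `X = Y + c` is needed. -/
lemma ofReal_exp_neg_mul_measure_ge_add_le (hX : Measurable X) (hY : Measurable Y)
    (hXY : IndepFun X Y P)
    (htail : ∀ y : ℝ, 0 ≤ y → P {ω | X ω > y} = ENNReal.ofReal (Real.exp (-y)))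
    {c c' d : ℝ} (hd : 0 ≤ d) (h : c < c' + d) :
    ENNReal.ofReal (Real.exp (-d)) * P {ω | X ω ≥ Y ω + c'} ≤ P {ω | X ω ≥ Y ω + c} :=
  calc ENNReal.ofReal (Real.exp (-d)) * P {ω | X ω ≥ Y ω + c'}
      ≤ ENNReal.ofReal (Real.exp (-d)) * P {ω | X ω > Y ω + (c - d)} := by
        gcongr
        linarith
    _ ≤ P {ω | X ω > Y ω + c} :=
        ofReal_exp_neg_mul_measure_gt_add_le hX hY hXY htail hd (by linarith)
    _ ≤ P {ω | X ω ≥ Y ω + c} := measure_mono fun ω (hω : Y ω + c < X ω) => hω.le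

end ExponentialTail

lemma mul_toReal_le_toReal_of_ofReal_mul_le {a : ℝ} {x y : ℝ≥0∞} (ha : 0 ≤ a) (hy : y ≠ ∞)
    (h : ENNReal.ofReal a * x ≤ y) : a * x.toReal ≤ y.toReal := by
  simpa [ENNReal.toReal_mul, ENNReal.toReal_ofReal ha] using ENNReal.toReal_mono hy h

lemma le_cum {s : ℕ → ℝ} (hs : ∀ j, 0 ≤ s j) (t : ℕ) : s t ≤ cum s t :=
  Finset.single_le_sum (fun j _ => hs j) (Finset.self_mem_range_succ t)

lemma cum_pos {s : ℕ → ℝ} (h0 : 0 < s 0) (hs : ∀ j, 0 ≤ s j) (t : ℕ) : 0 < cum s t :=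
  h0.trans_le (Finset.single_le_sum (fun j _ => hs j) (Finset.mem_range.2 t.succ_pos))

lemma cum_succ (s : ℕ → ℝ) (n : ℕ) : cum s (n + 1) = cum s n + s (n + 1) :=
  Finset.sum_range_succ s (n + 1)

lemma eventually_max_div_vmax_lt {s1 s2 : ℕ → ℝ} (hs1 : ∀ j, 0 ≤ s1 j) (hs2 : ∀ j, 0 ≤ s2 j)
    {r : ℝ} (h : limsup (fun t => max (s1 t) (s2 t) / vmax s1 s2 t) atTop < r) :
    ∀ᶠ t in atTop, max (s1 t) (s2 t) / vmax s1 s2 t < r :=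
  eventually_lt_of_limsup_lt h <| isBoundedUnder_of ⟨1, fun t =>
    div_le_one_of_le₀ (max_le_max (le_cum hs1 t) (le_cum hs2 t))
      (le_max_of_le_left (Finset.sum_nonneg fun j _ => hs1 j))⟩

/-- The lead of `b` over `a` in units of the perturbation scale `μ max a b`. -/
noncomputable def scaledLead (μ a b : ℝ) : ℝ := (b - a) / (μ * max a b)

lemma scaledLead_le {μ a b s : ℝ} (hμ : 0 < μ) (ha : 0 < a) (hs : 0 ≤ s) :
    scaledLead μ a b ≤ scaledLead μ (a + s) b + 2 * s / (μ * max (a + s) b) := by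
  have hV : 0 < max a b := lt_max_of_lt_left ha
  have hV' : 0 < max (a + s) b := lt_max_of_lt_left (by linarith)
  rw [scaledLead, scaledLead, ← add_div, div_le_div_iff₀ (by positivity) (by positivity)]
  have key : (b - a) * max (a + s) b ≤ (b - a + s) * max a b := by
    rcases le_total a b with h1 | h1 <;> rcases le_total (a + s) b with h2 | h2
    · rw [max_eq_right h1, max_eq_right h2]; nlinarith
    · rw [max_eq_right h1, max_eq_left h2]; nlinarith [sq_nonneg (b - a)]
    · rw [max_eq_left h1, max_eq_right h2]; nlinarith
    · rw [max_eq_left h1, max_eq_left h2]; nlinarith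
  nlinarith [mul_le_mul_of_nonneg_left key hμ.le]

lemma scaledLead_lt_add {μ a b s L : ℝ} (hμ : 0 < μ) (ha : 0 < a) (hs : 0 ≤ s)
    (hsL : s / max (a + s) b < μ * L / 2) :
    scaledLead μ a b < scaledLead μ (a + s) b + L := by
  have hstep : 2 * s / (μ * max (a + s) b) < L := by
    calc 2 * s / (μ * max (a + s) b) = 2 / μ * (s / max (a + s) b) := by
          rw [mul_div_mul_comm]
      _ < 2 / μ * (μ * L / 2) := by gcongr
      _ = L := by field_simp
  linarith [scaledLead_le (b := b) hμ ha hs]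

section Game

variable {Ω : Type*} (ξ : ℕ × Bool → Ω → ℝ) {μ : ℝ} {s1 s2 : ℕ → ℝ}

lemma pick1_eq (hμ : 0 < μ) {t u : ℕ} (hv : 0 < vmax s1 s2 u) :
    pick1 ξ μ s1 s2 t u =
      {ω | ξ (t, true) ω > ξ (t, false) ω + scaledLead μ (cum s1 u) (cum s2 u)} := by
  ext ω
  have hμv : 0 < μ * vmax s1 s2 u := mul_pos hμ hv
  change cum s2 u + μ * vmax s1 s2 u * ξ (t, false) ω <
      cum s1 u + μ * vmax s1 s2 u * ξ (t, true) ω ↔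
    ξ (t, false) ω + (cum s2 u - cum s1 u) / (μ * vmax s1 s2 u) < ξ (t, true) ω
  rw [← lt_sub_iff_add_lt' (a := ξ (t, false) ω), div_lt_iff₀ hμv]
  constructor <;> intro h <;> linarith

lemma compl_pick1_eq (hμ : 0 < μ) {t u : ℕ} (hv : 0 < vmax s1 s2 u) :
    (pick1 ξ μ s1 s2 t u)ᶜ =
      {ω | ξ (t, false) ω ≥ ξ (t, true) ω + scaledLead μ (cum s2 u) (cum s1 u)} := by
  ext ω
  have hμv : 0 < μ * vmax s1 s2 u := mul_pos hμ hv
  rw [Set.mem_compl_iff, Set.mem_ofPred, scaledLead, max_comm]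
  change ¬ cum s2 u + μ * vmax s1 s2 u * ξ (t, false) ω <
      cum s1 u + μ * vmax s1 s2 u * ξ (t, true) ω ↔
    ξ (t, true) ω + (cum s1 u - cum s2 u) / (μ * vmax s1 s2 u) ≤ ξ (t, false) ω
  rw [not_lt, ← le_sub_iff_add_le' (a := ξ (t, true) ω), div_le_iff₀ hμv]
  constructor <;> intro h <;> linarith

variable [MeasurableSpace Ω] (Pr : Measure Ω) [IsProbabilityMeasure Pr] {n : ℕ} {L : ℝ}

lemma exp_neg_mul_measure_pick1_le (hmeas : ∀ p, Measurable (ξ p)) (hindep : iIndepFun ξ Pr)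
    (htail : ∀ p, ∀ y : ℝ, 0 ≤ y → Pr {ω | ξ p ω > y} = ENNReal.ofReal (Real.exp (-y)))
    (hμ : 0 < μ) (hA : 0 < cum s1 n) (hs1 : 0 ≤ s1 (n + 1)) (hs2 : s2 (n + 1) = 0)
    (hL : 0 ≤ L) (hdev : s1 (n + 1) / vmax s1 s2 (n + 1) < μ * L / 2) :
    Real.exp (-L) * (Pr (pick1 ξ μ s1 s2 (n + 1) (n + 1))).toReal ≤
      (Pr (pick1 ξ μ s1 s2 (n + 1) n)).toReal := by
  have hv : vmax s1 s2 (n + 1) = max (cum s1 n + s1 (n + 1)) (cum s2 n) := by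
    rw [vmax, cum_succ, cum_succ, hs2, add_zero]
  rw [pick1_eq ξ hμ (lt_max_of_lt_left hA),
    pick1_eq ξ hμ (hv ▸ lt_max_of_lt_left (by linarith)), cum_succ, cum_succ, hs2, add_zero]
  refine mul_toReal_le_toReal_of_ofReal_mul_le (Real.exp_nonneg _) (measure_ne_top _ _) ?_
  exact ofReal_exp_neg_mul_measure_gt_add_le (hmeas _) (hmeas _)
    (hindep.indepFun (by simp)) (htail _) hL (scaledLead_lt_add hμ hA hs1 (hv ▸ hdev)).le

lemma exp_neg_mul_measure_compl_pick1_le (hmeas : ∀ p, Measurable (ξ p))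
    (hindep : iIndepFun ξ Pr)
    (htail : ∀ p, ∀ y : ℝ, 0 ≤ y → Pr {ω | ξ p ω > y} = ENNReal.ofReal (Real.exp (-y)))
    (hμ : 0 < μ) (hB : 0 < cum s2 n) (hs1 : s1 (n + 1) = 0) (hs2 : 0 ≤ s2 (n + 1))
    (hL : 0 ≤ L) (hdev : s2 (n + 1) / vmax s1 s2 (n + 1) < μ * L / 2) :
    Real.exp (-L) * (Pr (pick1 ξ μ s1 s2 (n + 1) (n + 1))ᶜ).toReal ≤
      (Pr (pick1 ξ μ s1 s2 (n + 1) n)ᶜ).toReal := by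
  have hv : vmax s1 s2 (n + 1) = max (cum s2 n + s2 (n + 1)) (cum s1 n) := by
    rw [vmax, cum_succ, cum_succ, hs1, add_zero, max_comm]
  rw [compl_pick1_eq ξ hμ (lt_max_of_lt_right hB),
    compl_pick1_eq ξ hμ (hv ▸ lt_max_of_lt_left (by linarith)), cum_succ, cum_succ, hs1,
    add_zero]
  refine mul_toReal_le_toReal_of_ofReal_mul_le (Real.exp_nonneg _) (measure_ne_top _ _) ?_
  exact ofReal_exp_neg_mul_measure_ge_add_le (hmeas _) (hmeas _)
    (hindep.indepFun (by simp)) (htail _) hL (scaledLead_lt_add hμ hB hs2 (hv ▸ hdev))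

lemma exp_neg_mul_ifplGain_le_fplGain (hmeas : ∀ p, Measurable (ξ p))
    (hindep : iIndepFun ξ Pr)
    (htail : ∀ p, ∀ y : ℝ, 0 ≤ y → Pr {ω | ξ p ω > y} = ENNReal.ofReal (Real.exp (-y)))
    (hμ : 0 < μ) (hA : 0 < cum s1 n) (hB : 0 < cum s2 n) (hs1 : 0 ≤ s1 (n + 1))
    (hs2 : 0 ≤ s2 (n + 1)) (hone : s1 (n + 1) = 0 ∨ s2 (n + 1) = 0) (hL : 0 ≤ L)
    (hdev : max (s1 (n + 1)) (s2 (n + 1)) / vmax s1 s2 (n + 1) < μ * L / 2) :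
    Real.exp (-L) * ifplGain Pr ξ μ s1 s2 (n + 1) ≤ fplGain Pr ξ μ s1 s2 (n + 1) := by
  simp only [fplGain, ifplGain, Nat.add_sub_cancel]
  rcases hone with h | h
  · rw [h, max_eq_right hs2] at hdev
    rw [h]
    have hP := exp_neg_mul_measure_compl_pick1_le ξ Pr hmeas hindep htail hμ hB h hs2 hL hdev
    nlinarith [mul_le_mul_of_nonneg_left hP hs2]
  · rw [h, max_eq_left hs1] at hdev
    rw [h]
    have hP := exp_neg_mul_measure_pick1_le ξ Pr hmeas hindep htail hμ hA hs1 h hL hdev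
    nlinarith [mul_le_mul_of_nonneg_left hP hs1]

end Game

theorem fpl_ifpl_step_comparison_small_deviation_general
    {Ω : Type*} [MeasurableSpace Ω] (Pr : Measure Ω) [IsProbabilityMeasure Pr]
    (ξ : ℕ × Bool → Ω → ℝ) (hmeas : ∀ p, Measurable (ξ p))
    (hindep : iIndepFun ξ Pr)
    (htail : ∀ p, ∀ y : ℝ, 0 ≤ y → Pr {ω | ξ p ω > y} = ENNReal.ofReal (Real.exp (-y)))
    (μ : ℝ) (hμ0 : 0 < μ)
    (s1 s2 : ℕ → ℝ) (h01 : s1 0 = 1) (h02 : s2 0 = 1)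
    (hpos : ∀ t, 1 ≤ t → 0 ≤ s1 t ∧ 0 ≤ s2 t)
    (hone : ∀ t, 1 ≤ t → s1 t = 0 ∨ s2 t = 0)
    (δ : ℝ) (hδ0 : 0 < δ) (hδ1 : δ < 1)
    (hdev : Filter.limsup (fun t => max (s1 t) (s2 t) / vmax s1 s2 t) atTop ≤ μ * δ / 2) :
    ∃ t0 : ℕ, ∀ t, t0 ≤ t →
      fplGain Pr ξ μ s1 s2 t ≥ (1 - δ) * ifplGain Pr ξ μ s1 s2 t := by
  set L := -Real.log (1 - δ)
  have hexpL : Real.exp (-L) = 1 - δ := by rw [neg_neg, Real.exp_log (by linarith)]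
  have hδL : δ < L := by
    have := Real.add_one_lt_exp (x := -L) fun h => hδ0.ne' (by
      rw [h, Real.exp_zero] at hexpL; linarith)
    linarith
  have hs1 : ∀ j, 0 ≤ s1 j := fun
    | 0 => h01 ▸ zero_le_one
    | j + 1 => (hpos (j + 1) j.succ_pos).1
  have hs2 : ∀ j, 0 ≤ s2 j := fun
    | 0 => h02 ▸ zero_le_one
    | j + 1 => (hpos (j + 1) j.succ_pos).2
  obtain ⟨t1, ht1⟩ := eventually_atTop.1 <| eventually_max_div_vmax_lt hs1 hs2
    (hdev.trans_lt (by nlinarith : μ * δ / 2 < μ * L / 2))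
  refine ⟨t1 + 1, fun t ht => ?_⟩
  obtain ⟨n, rfl⟩ : ∃ n, t = n + 1 := ⟨t - 1, by omega⟩
  rw [ge_iff_le, ← hexpL]
  exact exp_neg_mul_ifplGain_le_fplGain ξ Pr hmeas hindep htail hμ0
    (cum_pos (h01 ▸ one_pos) hs1 n) (cum_pos (h02 ▸ one_pos) hs2 n) (hs1 _) (hs2 _)
    (hone _ (by omega)) (by linarith) (ht1 _ (by omega))

/-- If the game is non-degenerate and its deviation `limsup s_t/v_t` is at most `μδ/2`,
then the expected one-step gains satisfy `l_t ≥ (1−δ) r_t` for all sufficiently large `t`. -/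
theorem fpl_ifpl_step_comparison_small_deviation
    {Ω : Type*} [MeasurableSpace Ω] (Pr : Measure Ω) [IsProbabilityMeasure Pr]
    (ξ : ℕ × Bool → Ω → ℝ) (hmeas : ∀ p, Measurable (ξ p))
    (hindep : iIndepFun ξ Pr)
    (htail : ∀ p, ∀ y : ℝ, 0 ≤ y → Pr {ω | ξ p ω > y} = ENNReal.ofReal (Real.exp (-y)))
    (μ : ℝ) (hμ0 : 0 < μ) (hμ1 : μ < 1)
    (s1 s2 : ℕ → ℝ) (h01 : s1 0 = 1) (h02 : s2 0 = 1)
    (hpos : ∀ t, 1 ≤ t → 0 ≤ s1 t ∧ 0 ≤ s2 t)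
    (hone : ∀ t, 1 ≤ t → s1 t = 0 ∨ s2 t = 0)
    (hnondeg : Tendsto (vmax s1 s2) atTop atTop)
    (δ : ℝ) (hδ0 : 0 < δ) (hδ1 : δ < 1)
    (hdev : Filter.limsup (fun t => max (s1 t) (s2 t) / vmax s1 s2 t) atTop ≤ μ * δ / 2) :
    ∃ t0 : ℕ, ∀ t, t0 ≤ t →
      fplGain Pr ξ μ s1 s2 t ≥ (1 - δ) * ifplGain Pr ξ μ s1 s2 t :=
  fpl_ifpl_step_comparison_small_deviation_general Pr ξ hmeas hindep htail μ hμ0 s1 s2 h01 h02 hpos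
    hone δ hδ0 hδ1 hdev
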